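/- Let U ⊆ ℂⁿ be open, let F : U → ℂⁿ be holomorphic with F(x₀) = 0 and invertible derivative dF(x₀), and let F_m : U → ℂⁿ be holomorphic maps converging to F uniformly on compact subsets of U. Then there exists a closed ball K centered at x₀ contained in U and m₀ ∈ ℕ such that for all m ≥ m₀, F_m has a zero in the interior of K. -/

import Mathlib

open Filter
open Metric Topology NNReal

/-- Schwarz-type Lipschitz estimate: a holomorphic map bounded by `δ` on a ball of radius `R`
is Lipschitz with constant `4δ/R` on the concentric ball of radius `R/8`. -/
lemma lip_of_bound {E F' : Type*} [NormedAddCommGroup E] [NormedSpace ℂ E]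
    [NormedAddCommGroup F'] [NormedSpace ℂ F']
    (h : E → F') {x₀ : E} {R δ : ℝ} (hR : 0 < R) (hδ : 0 < δ)
    (hd : DifferentiableOn ℂ h (ball x₀ R)) (hb : ∀ x ∈ ball x₀ R, ‖h x‖ ≤ δ) :
    ∀ x ∈ closedBall x₀ (R/8), ∀ y ∈ closedBall x₀ (R/8),
      ‖h x - h y‖ ≤ 4 * δ / R * ‖x - y‖ := by
  intro x hx y hy
  rcases eq_or_ne x y with rfl | hne
  · simp
  set v := x - y with hv
  have hd0 : 0 < ‖v‖ := by simpa [hv, sub_eq_zero] using hne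
  have hdle : ‖v‖ ≤ R / 4 := by
    have h1 : dist x x₀ ≤ R / 8 := hx
    have h2 : dist y x₀ ≤ R / 8 := hy
    calc ‖v‖ = dist x y := (dist_eq_norm x y).symm
      _ ≤ dist x x₀ + dist y x₀ := dist_triangle_right _ _ _
      _ ≤ R / 8 + R / 8 := add_le_add h1 h2
      _ = R / 4 := by ring
  set ρ : ℝ := 3 * R / (4 * ‖v‖) with hρ
  have hρ3 : (3 : ℝ) ≤ ρ := by
    rw [hρ, le_div_iff₀ (by positivity)]
    nlinarith
  set g : ℂ → F' := fun z => h (y + z • v) with hg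
  have hmem : ∀ z ∈ ball (0 : ℂ) ρ, y + z • v ∈ ball x₀ R := by
    intro z hz
    have hz' : ‖z‖ < ρ := by simpa using hz
    have e1 : y + z • v - x₀ = (y - x₀) + z • v := by abel
    have e2 : ‖(y - x₀) + z • v‖ ≤ ‖y - x₀‖ + ‖z‖ * ‖v‖ := by
      simpa [norm_smul] using norm_add_le (y - x₀) (z • v)
    have hyx : ‖y - x₀‖ ≤ R / 8 := by
      simpa [dist_eq_norm] using (mem_closedBall.1 hy)
    have hzv : ‖z‖ * ‖v‖ < 3 * R / 4 := by
      have h4 := mul_lt_mul_of_pos_right hz' hd0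
      have h5 : ρ * ‖v‖ = 3 * R / 4 := by
        rw [hρ]; field_simp
      linarith
    rw [mem_ball, dist_eq_norm, e1]
    calc ‖(y - x₀) + z • v‖ ≤ ‖y - x₀‖ + ‖z‖ * ‖v‖ := e2
      _ < R / 8 + 3 * R / 4 := by linarith
      _ < R := by linarith
  have hgd : DifferentiableOn ℂ g (ball (0:ℂ) ρ) := by
    apply hd.comp
    · intro z _
      exact (differentiable_id.smul_const v).const_add y |>.differentiableAt.differentiableWithinAt
    · intro z hz; exact hmem z hz
  have hmaps : Set.MapsTo g (ball (0:ℂ) ρ) (ball (g 0) (3 * δ)) := by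
    intro z hz
    have h0 : (0:ℂ) ∈ ball (0:ℂ) ρ := by
      simp [mem_ball, dist_eq_norm]; linarith
    have b1 : ‖g z‖ ≤ δ := hb _ (hmem z hz)
    have b2 : ‖g 0‖ ≤ δ := hb _ (hmem 0 h0)
    have : ‖g z - g 0‖ ≤ 2 * δ := by
      calc ‖g z - g 0‖ ≤ ‖g z‖ + ‖g 0‖ := norm_sub_le _ _
        _ ≤ 2 * δ := by linarith
    have : ‖g z - g 0‖ < 3 * δ := by linarith
    simpa [mem_ball, dist_eq_norm] using this
  have h1 : (1:ℂ) ∈ ball (0:ℂ) ρ := by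
    simp only [mem_ball, dist_zero_right, norm_one]
    linarith
  have key := Complex.dist_le_div_mul_dist_of_mapsTo_ball hgd (hmaps.mono_right ball_subset_closedBall) h1
  have hg1 : g 1 = h x := by simp [hg, hv]
  have hg0 : g 0 = h y := by simp [hg]
  rw [hg1, hg0] at key
  have hdist : dist (1:ℂ) 0 = 1 := by simp
  rw [hdist, mul_one, dist_eq_norm] at key
  calc ‖h x - h y‖ ≤ 3 * δ / ρ := key
    _ = 4 * δ / R * ‖v‖ := by
        rw [hρ]; field_simp
    _ = 4 * δ / R * ‖x - y‖ := by rw [hv]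

/-- Multivariable Hurwitz/Rouché stability of zeros: if `F : U → ℂⁿ` is holomorphic with
`F x₀ = 0` and invertible derivative at `x₀`, and holomorphic maps `F_m` converge to `F`
locally uniformly on `U`, then on some closed ball around `x₀` inside `U` every `F_m`
with `m` large has a zero in its interior. -/
theorem hurwitz_multivariable (n : ℕ)
    (U : Set (Fin n → ℂ)) (hU : IsOpen U)
    (x₀ : Fin n → ℂ) (hx₀ : x₀ ∈ U)
    (F : (Fin n → ℂ) → (Fin n → ℂ)) (hF : DifferentiableOn ℂ F U)
    (hF0 : F x₀ = 0)
    (f' : (Fin n → ℂ) ≃L[ℂ] (Fin n → ℂ))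
    (hderiv : HasFDerivAt F (f' : (Fin n → ℂ) →L[ℂ] (Fin n → ℂ)) x₀)
    (Fm : ℕ → (Fin n → ℂ) → (Fin n → ℂ))
    (hFm : ∀ m, DifferentiableOn ℂ (Fm m) U)
    (hconv : TendstoLocallyUniformlyOn Fm F atTop U) :
    ∃ r > (0:ℝ), Metric.closedBall x₀ r ⊆ U ∧
      ∃ m₀ : ℕ, ∀ m ≥ m₀, ∃ x ∈ Metric.ball x₀ r, Fm m x = 0 := by
  classical
  rcases subsingleton_or_nontrivial (Fin n → ℂ) with hs | hs
  · rcases Metric.isOpen_iff.1 hU x₀ hx₀ with ⟨ε, hε, hball⟩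
    refine ⟨ε/2, by linarith, (closedBall_subset_ball (by linarith)).trans hball,
      0, fun m _ => ⟨x₀, mem_ball_self (by linarith), Subsingleton.elim _ _⟩⟩
  -- main case
  set N : ℝ := ‖(f'.symm : (Fin n → ℂ) →L[ℂ] (Fin n → ℂ))‖ with hN
  have hNpos : 0 < N := f'.norm_symm_pos
  set η : ℝ := N⁻¹ / 16 with hη
  have hηpos : 0 < η := by positivity
  -- little-o estimate for F near x₀, together with membership in U
  have hev : ∀ᶠ x in 𝓝 x₀, x ∈ U ∧ ‖F x - F x₀ - f' (x - x₀)‖ ≤ η * ‖x - x₀‖ :=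
    (hU.eventually_mem hx₀).and (hderiv.isLittleO.def hηpos)
  rcases Metric.eventually_nhds_iff_ball.1 hev with ⟨R, hRpos, hRball⟩
  have hballU : ball x₀ R ⊆ U := fun x hx => (hRball x hx).1
  -- the nonlinear part of F
  set G : (Fin n → ℂ) → (Fin n → ℂ) := fun x => F x - f' (x - x₀) with hG
  have hGd : DifferentiableOn ℂ G (ball x₀ R) := by
    apply DifferentiableOn.sub (hF.mono hballU)
    exact fun x _ =>
      ((f' : (Fin n → ℂ) →L[ℂ] (Fin n → ℂ)).differentiable.comp
        (differentiable_id.sub_const x₀)).differentiableAt.differentiableWithinAt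
  have hGb : ∀ x ∈ ball x₀ R, ‖G x‖ ≤ η * R := by
    intro x hx
    have h1 := (hRball x hx).2
    have h2 : ‖x - x₀‖ ≤ R := by
      have := mem_ball_iff_norm.1 hx
      linarith
    calc ‖G x‖ = ‖F x - F x₀ - f' (x - x₀)‖ := by rw [hG, hF0]; simp
      _ ≤ η * ‖x - x₀‖ := h1
      _ ≤ η * R := by nlinarith
  have lipG := lip_of_bound G hRpos (by positivity : (0:ℝ) < η * R) hGd hGb
  -- uniform convergence on a compact ball
  have hKc : IsCompact (closedBall x₀ (R/2)) := isCompact_closedBall _ _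
  have hKU : closedBall x₀ (R/2) ⊆ U :=
    (closedBall_subset_ball (by linarith)).trans hballU
  have hunif : TendstoUniformlyOn Fm F atTop (closedBall x₀ (R/2)) :=
    (tendstoLocallyUniformlyOn_iff_tendstoUniformlyOn_of_compact hKc).mp (hconv.mono hKU)
  set σ : ℝ := N⁻¹ * R / 1024 with hσ
  have hσpos : 0 < σ := by positivity
  rcases (Metric.tendstoUniformlyOn_iff.1 hunif σ hσpos).exists_forall_of_atTop with _
  obtain ⟨m₀, hm₀⟩ := Filter.eventually_atTop.1 (Metric.tendstoUniformlyOn_iff.1 hunif σ hσpos)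
  refine ⟨R/8, by linarith, (closedBall_subset_ball (by linarith)).trans hballU, m₀, ?_⟩
  intro m hm
  -- Lipschitz control on Fm m - F
  set H : (Fin n → ℂ) → (Fin n → ℂ) := fun x => Fm m x - F x with hH
  have hHd : DifferentiableOn ℂ H (ball x₀ (R/2)) :=
    DifferentiableOn.sub ((hFm m).mono (ball_subset_closedBall.trans hKU))
      (hF.mono (ball_subset_closedBall.trans hKU))
  have hHb : ∀ x ∈ ball x₀ (R/2), ‖H x‖ ≤ σ := by
    intro x hx
    have := hm₀ m hm x (ball_subset_closedBall hx)
    rw [dist_comm, dist_eq_norm] at this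
    exact le_of_lt this
  have lipH := lip_of_bound H (by linarith : (0:ℝ) < R/2) hσpos hHd hHb
  -- linear approximation of Fm m on the small closed ball
  set c : ℝ≥0 := ⟨N⁻¹/2, by positivity⟩ with hc
  have happrox : ApproximatesLinearOn (Fm m)
      (f' : (Fin n → ℂ) →L[ℂ] (Fin n → ℂ)) (closedBall x₀ (R/16)) c := by
    intro x hx y hy
    have hx8 : x ∈ closedBall x₀ (R/8) := closedBall_subset_closedBall (by linarith) hx
    have hy8 : y ∈ closedBall x₀ (R/8) := closedBall_subset_closedBall (by linarith) hy
    have hx16 : x ∈ closedBall x₀ ((R/2)/8) := closedBall_subset_closedBall (by linarith) hx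
    have hy16 : y ∈ closedBall x₀ ((R/2)/8) := closedBall_subset_closedBall (by linarith) hy
    have e1 : Fm m x - Fm m y - f' (x - y) = (G x - G y) + (H x - H y) := by
      simp only [hG, hH, map_sub]
      abel
    have b1 := lipG x hx8 y hy8
    have b2 := lipH x hx16 y hy16
    have e2 : 4 * (η * R) / R = 4 * η := by field_simp
    have e3 : 4 * σ / (R/2) = 8 * σ / R := by field_simp; ring
    rw [e2] at b1
    rw [e3] at b2
    have hσb : 8 * σ / R ≤ N⁻¹ / 8 := by
      rw [hσ]
      rw [div_le_div_iff₀ (by linarith) (by norm_num)]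
      nlinarith
    have hcc : (c : ℝ) = N⁻¹ / 2 := rfl
    calc ‖Fm m x - Fm m y - f' (x - y)‖ = ‖(G x - G y) + (H x - H y)‖ := by rw [e1]
      _ ≤ ‖G x - G y‖ + ‖H x - H y‖ := norm_add_le _ _
      _ ≤ 4 * η * ‖x - y‖ + 8 * σ / R * ‖x - y‖ := add_le_add b1 b2
      _ ≤ (N⁻¹/4) * ‖x - y‖ + (N⁻¹/8) * ‖x - y‖ := by
          have hnn : (0:ℝ) ≤ ‖x - y‖ := norm_nonneg _
          have : 4 * η = N⁻¹ / 4 := by rw [hη]; ring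
          nlinarith [mul_le_mul_of_nonneg_right hσb hnn]
      _ ≤ (c : ℝ) * ‖x - y‖ := by
          rw [hcc]
          have hnn : (0:ℝ) ≤ ‖x - y‖ := norm_nonneg _
          nlinarith
  -- surjectivity onto a ball around Fm m x₀
  have hsurj := happrox.surjOn_closedBall_of_nonlinearRightInverse
    f'.toNonlinearRightInverse (by linarith : (0:ℝ) ≤ R/16) (subset_refl _)
  have hnn : (f'.toNonlinearRightInverse.nnnorm : ℝ) = N := rfl
  have hzero : (0 : Fin n → ℂ) ∈
      closedBall (Fm m x₀) (((f'.toNonlinearRightInverse.nnnorm : ℝ)⁻¹ - c) * (R/16)) := by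
    rw [mem_closedBall, hnn]
    have hd0 : dist (0 : Fin n → ℂ) (Fm m x₀) < σ := by
      have := hm₀ m hm x₀ (mem_closedBall_self (by linarith))
      rwa [hF0] at this
    have hcc : (c : ℝ) = N⁻¹ / 2 := rfl
    have : (N⁻¹ - (c:ℝ)) * (R/16) = N⁻¹ * R / 32 := by rw [hcc]; ring
    rw [this]
    have hσle : σ ≤ N⁻¹ * R / 32 := by
      rw [hσ]
      have : (0:ℝ) < N⁻¹ * R := by positivity
      linarith
    linarith
  obtain ⟨x, hx, hfx⟩ := hsurj hzero
  exact ⟨x, lt_of_le_of_lt (mem_closedBall.1 hx) (by linarith), hfx⟩
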